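/- Let β ∈ ℂ with Re(β) > 0, ε > 0, k ∈ ℕ with k ≥ 1, and R > exp^∘k(0) with M_{ε,k}(R) < Re(β). Let D ⊆ ℂ be an open set with Re(ζ) ≥ R for all ζ ∈ D, and suppose there exists d > 0 with |Im(ζ)| ≤ d·Re(ζ) for all ζ ∈ D. Let f : D → ℂ be holomorphic with f(D) ⊆ D and |f(ζ) − (ζ + β)| ≤ M_{ε,k}(Re(ζ)) for all ζ ∈ D, and let φ(ζ) := lim_{n→∞} (f^∘n(ζ) − n·β) (this limit exists for every ζ ∈ D). Then for every ν with 0 < ν < ε one has (φ(ζ) − ζ)·L_k(ζ)^{ν} → 0 uniformly on D as Re(ζ) → +∞; that is, for every δ > 0 there exists R' such that |φ(ζ) − ζ| · |L_k(ζ)|^{ν} ≤ δ for all ζ ∈ D with Re(ζ) ≥ R'. -/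

import Mathlib

open Filter Set

/-- `M_{ε,k}(x) = (∏_{j=0}^{k-1} log^∘j(x))⁻¹ · (log^∘k(x))^{-(1+ε)}`. -/
noncomputable def Mfun (ε : ℝ) (k : ℕ) (x : ℝ) : ℝ :=
  (∏ j ∈ Finset.range k, Real.log^[j] x)⁻¹ * (Real.log^[k] x) ^ (-(1 + ε))

/-!
Write `x = Re ζ` and `G(x) = (log^∘k x)^(-ε)`, so that `G' = -ε M_{ε,k}`. The bound on `f` gives
`Re f(w) ≥ Re w + c` with `c = Re β - M(R) > 0`, so orbits move right at linear speed and
`|f^∘n(ζ) - nβ - ζ| ≤ ∑_{m<n} M(x + mc)`. As `M` decreases, the mean value theorem bounds each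
term `c M(x + (m+1)c)` by a difference of consecutive values of `G / ε`, so the sum telescopes to
at most `M(x) + G(x)/(εc)` and `|φ(ζ) - ζ| = O(G(x))`. In the sector `|Im ζ| ≤ d Re ζ` we have
`|ζ| ≤ s x` with `s = √(1 + d²)`, and since `|Log w| ≤ log |w| + π`, induction on `j` gives
`log^∘j x ≤ |L_j(ζ)| ≤ s log^∘j x + j (log s + π)`. Hence `|L_k(ζ)| = O(log^∘k x)` and the
product is `O((log^∘k x)^(ν-ε)) → 0`.
-/

section IteratedLog

open Real Function

variable {j k : ℕ} {x y : ℝ}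

lemma monotone_iterate_exp : Monotone fun m => exp^[m] :=
  monotone_iterate_of_id_le fun t => (le_add_of_nonneg_right zero_le_one).trans (add_one_le_exp t)

lemma le_iterate_log_of_iterate_exp_le (h : exp^[j] y ≤ x) : y ≤ log^[j] x := by
  induction j generalizing y with
  | zero => simpa using h
  | succ n ih =>
    rw [iterate_succ_apply] at h
    have h' := ih h
    rw [iterate_succ_apply']
    exact (le_log_iff_exp_le ((exp_pos y).trans_le h')).2 h'

lemma lt_iterate_log_of_iterate_exp_lt (h : exp^[j] y < x) : y < log^[j] x := by
  induction j generalizing y with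
  | zero => simpa using h
  | succ n ih =>
    rw [iterate_succ_apply] at h
    have h' := ih h
    rw [iterate_succ_apply']
    exact (lt_log_iff_exp_lt ((exp_pos y).trans h')).2 h'

lemma iterate_log_pos (hx : exp^[k] 0 < x) (hj : j ≤ k) : 0 < log^[j] x :=
  lt_iterate_log_of_iterate_exp_lt ((monotone_iterate_exp hj 0).trans_lt hx)

lemma one_le_iterate_log (hx : exp^[k] 1 ≤ x) (hj : j ≤ k) : 1 ≤ log^[j] x :=
  le_iterate_log_of_iterate_exp_le ((monotone_iterate_exp hj 1).trans hx)

lemma iterate_exp_zero_lt_of_iterate_exp_one_le (hx : exp^[k] 1 ≤ x) : exp^[k] 0 < x :=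
  ((exp_strictMono.iterate k) one_pos).trans_le hx

lemma iterate_log_le_iterate_log (hx : exp^[j] 0 < x) (hxy : x ≤ y) :
    log^[j] x ≤ log^[j] y := by
  induction j generalizing x y with
  | zero => simpa
  | succ n ih =>
    have hx' : exp^[n] 0 < x := (monotone_iterate_exp n.le_succ 0).trans_lt hx
    rw [iterate_succ_apply', iterate_succ_apply']
    exact log_le_log (iterate_log_pos hx n.le_succ) (ih hx' hxy)

lemma tendsto_iterate_log_atTop (k : ℕ) : Tendsto log^[k] atTop atTop := by
  induction k with
  | zero => exact tendsto_id
  | succ n ih => rw [iterate_succ']; exact tendsto_log_atTop.comp ih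

lemma hasDerivAt_iterate_log (hx : exp^[k] 0 < x) :
    HasDerivAt log^[k] (∏ j ∈ Finset.range k, log^[j] x)⁻¹ x := by
  induction k with
  | zero => simpa using hasDerivAt_id x
  | succ n ih =>
    have hx' : exp^[n] 0 < x := (monotone_iterate_exp n.le_succ 0).trans_lt hx
    rw [iterate_succ', Finset.prod_range_succ, mul_inv, mul_comm]
    exact (hasDerivAt_log (iterate_log_pos hx n.le_succ).ne').comp x (ih hx')

end IteratedLog

section Mfun

open Real

variable {ε : ℝ} {k : ℕ} {x y : ℝ}

lemma prod_iterate_log_pos (hx : exp^[k] 0 < x) : 0 < ∏ j ∈ Finset.range k, log^[j] x :=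
  Finset.prod_pos fun _ hj => iterate_log_pos hx (Finset.mem_range.1 hj).le

lemma Mfun_pos (hx : exp^[k] 0 < x) : 0 < Mfun ε k x := by
  have := prod_iterate_log_pos hx
  have := iterate_log_pos hx le_rfl
  unfold Mfun
  positivity

lemma Mfun_le_Mfun_of_le (hε : 0 ≤ 1 + ε) (hx : exp^[k] 0 < x) (hxy : x ≤ y) :
    Mfun ε k y ≤ Mfun ε k x := by
  have hy : exp^[k] 0 < y := hx.trans_le hxy
  have hprod : ∏ j ∈ Finset.range k, log^[j] x ≤ ∏ j ∈ Finset.range k, log^[j] y :=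
    Finset.prod_le_prod (fun j hj => (iterate_log_pos hx (Finset.mem_range.1 hj).le).le)
      fun j hj => iterate_log_le_iterate_log
        ((monotone_iterate_exp (Finset.mem_range.1 hj).le 0).trans_lt hx) hxy
  have hL : log^[k] y ^ (-(1 + ε)) ≤ log^[k] x ^ (-(1 + ε)) :=
    rpow_le_rpow_of_nonpos (iterate_log_pos hx le_rfl) (iterate_log_le_iterate_log hx hxy)
      (neg_nonpos.2 hε)
  exact mul_le_mul (inv_anti₀ (prod_iterate_log_pos hx) hprod) hL
    (rpow_pos_of_pos (iterate_log_pos hy le_rfl) _).le (inv_pos.2 (prod_iterate_log_pos hx)).le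

lemma hasDerivAt_iterate_log_rpow (hx : exp^[k] 0 < x) :
    HasDerivAt (fun t => log^[k] t ^ (-ε)) (-ε * Mfun ε k x) x := by
  have hL := iterate_log_pos hx le_rfl
  convert (hasDerivAt_iterate_log hx).rpow_const (p := -ε) (Or.inl hL.ne') using 1
  rw [Mfun, show -ε - 1 = -(1 + ε) by ring]
  ring

lemma Mfun_le_iterate_log_rpow (hx : exp^[k] 1 ≤ x) : Mfun ε k x ≤ log^[k] x ^ (-ε) := by
  have hL1 : 1 ≤ log^[k] x := one_le_iterate_log hx le_rfl
  have hL : 0 < log^[k] x := one_pos.trans_le hL1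
  have hprod : 1 ≤ ∏ j ∈ Finset.range k, log^[j] x :=
    Finset.one_le_prod fun j hj => one_le_iterate_log hx (Finset.mem_range.1 hj).le
  rw [Mfun, neg_add, rpow_add hL, rpow_neg_one, ← mul_assoc]
  refine mul_le_of_le_one_left (rpow_pos_of_pos hL _).le ?_
  exact mul_le_one₀ (inv_le_one_of_one_le₀ hprod) (inv_nonneg.2 hL.le) (inv_le_one_of_one_le₀ hL1)

end Mfun

section Sum

open Real

variable {ε c : ℝ} {k : ℕ} {x : ℝ}

lemma mul_Mfun_add_le (hε : 0 ≤ ε) (hc : 0 < c) (hx : exp^[k] 0 < x) :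
    ε * c * Mfun ε k (x + c) ≤ log^[k] x ^ (-ε) - log^[k] (x + c) ^ (-ε) := by
  have hderiv : ∀ t ∈ Icc x (x + c),
      HasDerivAt (fun t => log^[k] t ^ (-ε)) (-ε * Mfun ε k t) t :=
    fun t ht => hasDerivAt_iterate_log_rpow (hx.trans_le ht.1)
  have hmvt := (convex_Icc x (x + c)).image_sub_le_mul_sub_of_deriv_le
    (f := fun t => log^[k] t ^ (-ε)) (C := -ε * Mfun ε k (x + c))
    (fun t ht => (hderiv t ht).continuousAt.continuousWithinAt)
    (fun t ht => (hderiv t (interior_subset ht)).differentiableAt.differentiableWithinAt)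
    (fun t ht => by
      rw [interior_Icc] at ht
      rw [(hderiv t (Ioo_subset_Icc_self ht)).deriv, neg_mul, neg_mul, neg_le_neg_iff]
      exact mul_le_mul_of_nonneg_left (Mfun_le_Mfun_of_le (by linarith) (hx.trans ht.1) ht.2.le) hε)
    x (left_mem_Icc.2 (by linarith)) (x + c) (right_mem_Icc.2 (by linarith)) (by linarith)
  simp only [add_sub_cancel_left] at hmvt
  linarith

lemma sum_Mfun_le (hε : 0 < ε) (hc : 0 < c) (hx : exp^[k] 0 < x) (n : ℕ) :
    ∑ m ∈ Finset.range n, Mfun ε k (x + m * c) ≤ Mfun ε k x + log^[k] x ^ (-ε) / (ε * c) := by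
  set G : ℕ → ℝ := fun m => log^[k] (x + m * c) ^ (-ε)
  have hx' : ∀ m : ℕ, exp^[k] 0 < x + m * c := fun m =>
    hx.trans_le (le_add_of_nonneg_right (by positivity))
  have htail : ε * c * ∑ m ∈ Finset.range n, Mfun ε k (x + (m + 1 : ℕ) * c) ≤ G 0 - G n := by
    rw [← Finset.sum_range_sub', Finset.mul_sum]
    refine Finset.sum_le_sum fun m _ => ?_
    have := mul_Mfun_add_le hε.le hc (hx' m)
    simp only [G]
    push_cast at this ⊢
    rwa [add_one_mul, ← add_assoc]
  have hGn : 0 < G n := rpow_pos_of_pos (iterate_log_pos (hx' n) le_rfl) _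
  calc ∑ m ∈ Finset.range n, Mfun ε k (x + m * c)
      ≤ ∑ m ∈ Finset.range (n + 1), Mfun ε k (x + m * c) :=
        Finset.sum_le_sum_of_subset_of_nonneg (Finset.range_subset_range.2 n.le_succ)
          fun m _ _ => (Mfun_pos (hx' m)).le
    _ = Mfun ε k x + ∑ m ∈ Finset.range n, Mfun ε k (x + (m + 1 : ℕ) * c) := by
        rw [Finset.sum_range_succ', add_comm]; simp
    _ ≤ Mfun ε k x + log^[k] x ^ (-ε) / (ε * c) := by
        rw [add_le_add_iff_left, le_div_iff₀' (by positivity)]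
        simp only [G, Nat.cast_zero, zero_mul, add_zero] at htail
        linarith

end Sum

section ComplexLog

open Real

lemma Real.log_add_le_log_add {a b : ℝ} (ha : 1 ≤ a) (hb : 0 ≤ b) : log (a + b) ≤ log a + b := by
  have ha0 : 0 < a := one_pos.trans_le ha
  have hpos : 0 < 1 + b / a := by positivity
  calc log (a + b) = log a + log (1 + b / a) := by
        rw [← log_mul ha0.ne' hpos.ne', mul_add, mul_one, mul_div_cancel₀ _ ha0.ne']
    _ ≤ log a + b / a := by gcongr; linarith [log_le_sub_one_of_pos hpos]
    _ ≤ log a + b := by gcongr; exact div_le_self hb ha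

lemma Complex.log_norm_le_norm_log (w : ℂ) : Real.log ‖w‖ ≤ ‖Complex.log w‖ :=
  (Complex.log_re w).symm.trans_le (Complex.re_le_norm _)

lemma Complex.norm_log_le_log_norm_add_pi {w : ℂ} (hw : 1 ≤ ‖w‖) :
    ‖Complex.log w‖ ≤ Real.log ‖w‖ + π := by
  calc ‖Complex.log w‖ ≤ |(Complex.log w).re| + |(Complex.log w).im| :=
        Complex.norm_le_abs_re_add_abs_im _
    _ ≤ Real.log ‖w‖ + π := by
        rw [Complex.log_re, Complex.log_im, abs_of_nonneg (Real.log_nonneg hw)]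
        gcongr
        exact Complex.abs_arg_le_pi w

lemma Complex.norm_log_le_of_norm_le {w : ℂ} {a s b : ℝ} (ha : 1 ≤ a) (hs : 1 ≤ s) (hb : 0 ≤ b)
    (hlow : a ≤ ‖w‖) (hup : ‖w‖ ≤ s * a + b) :
    ‖Complex.log w‖ ≤ s * Real.log a + (b + (Real.log s + π)) := by
  have hlog_a := Real.log_nonneg ha
  have hlog_w : Real.log ‖w‖ ≤ Real.log a + (Real.log s + b) :=
    calc Real.log ‖w‖ ≤ Real.log (s * a + b) := Real.log_le_log (by linarith) hup
      _ ≤ Real.log (s * a) + b := Real.log_add_le_log_add (by nlinarith) hb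
      _ = Real.log a + (Real.log s + b) := by
        rw [Real.log_mul (by positivity) (by positivity)]; ring
  have : Real.log a ≤ s * Real.log a := le_mul_of_one_le_left hlog_a hs
  linarith [Complex.norm_log_le_log_norm_add_pi (ha.trans hlow)]

lemma Complex.norm_iterate_log_mem_Icc {k j : ℕ} {ζ : ℂ} {s : ℝ} (hs : 1 ≤ s)
    (hx : Real.exp^[k] 1 ≤ ζ.re) (hζ : ‖ζ‖ ≤ s * ζ.re) (hj : j ≤ k) :
    ‖Complex.log^[j] ζ‖ ∈
      Icc (Real.log^[j] ζ.re) (s * Real.log^[j] ζ.re + j * (Real.log s + π)) := by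
  induction j with
  | zero => simpa using ⟨Complex.re_le_norm ζ, hζ⟩
  | succ n ih =>
    obtain ⟨hlow, hup⟩ := ih (by omega)
    have ha : 1 ≤ Real.log^[n] ζ.re := one_le_iterate_log hx (by omega)
    rw [Function.iterate_succ_apply', Function.iterate_succ_apply']
    constructor
    · exact (Real.log_le_log (by linarith) hlow).trans (Complex.log_norm_le_norm_log _)
    · have hb : 0 ≤ n * (Real.log s + π) := by
        have := Real.log_nonneg hs; have := pi_pos; positivity
      have := Complex.norm_log_le_of_norm_le ha hs hb hlow hup
      push_cast
      linarith

lemma Complex.norm_le_sqrt_mul_re {ζ : ℂ} {d : ℝ} (hre : 0 ≤ ζ.re) (him : |ζ.im| ≤ d * ζ.re) :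
    ‖ζ‖ ≤ √(1 + d ^ 2) * ζ.re := by
  rw [← pow_le_pow_iff_left₀ (norm_nonneg ζ) (by positivity) two_ne_zero, mul_pow,
    Real.sq_sqrt (by positivity), Complex.sq_norm, Complex.normSq_apply]
  have : ζ.im ^ 2 ≤ (d * ζ.re) ^ 2 := sq_le_sq' (abs_le.1 him).1 (abs_le.1 him).2
  nlinarith

lemma exists_norm_iterate_log_le (k : ℕ) (d : ℝ) : ∃ X : ℝ, ∀ ζ : ℂ, |ζ.im| ≤ d * ζ.re →
    X ≤ ζ.re → ‖Complex.log^[k] ζ‖ ≤ (√(1 + d ^ 2) + 1) * log^[k] ζ.re := by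
  set s := √(1 + d ^ 2)
  have hs : 1 ≤ s := Real.one_le_sqrt.2 (by nlinarith)
  obtain ⟨X, hX⟩ := eventually_atTop.1
    ((tendsto_iterate_log_atTop k).eventually_ge_atTop (k * (Real.log s + π)))
  refine ⟨max X (exp^[k] 1), fun ζ him hζ => ?_⟩
  have hx : exp^[k] 1 ≤ ζ.re := (le_max_right _ _).trans hζ
  have hre : 0 ≤ ζ.re := zero_le_one.trans (one_le_iterate_log (j := 0) hx (Nat.zero_le k))
  have := (Complex.norm_iterate_log_mem_Icc hs hx (Complex.norm_le_sqrt_mul_re hre him) le_rfl).2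
  have := hX ζ.re ((le_max_left _ _).trans hζ)
  linarith

end ComplexLog

lemma norm_iterate_sub_nsmul_sub_le {E : Type*} [SeminormedAddCommGroup E] (f : E → E) (β x : E)
    (n : ℕ) : ‖f^[n] x - n • β - x‖ ≤ ∑ m ∈ Finset.range n, ‖f (f^[m] x) - (f^[m] x + β)‖ := by
  have htelescope : ∑ m ∈ Finset.range n, (f (f^[m] x) - (f^[m] x + β)) = f^[n] x - n • β - x := by
    convert Finset.sum_range_sub (fun m => f^[m] x - m • β) n using 1
    · refine Finset.sum_congr rfl fun m _ => ?_
      rw [Function.iterate_succ_apply', succ_nsmul]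
      abel
    · simp
  rw [← htelescope]
  exact norm_sum_le _ _

lemma add_mul_le_iterate {α : Type*} {f : α → α} {D : Set α} {u : α → ℝ} {c : ℝ}
    (hf : MapsTo f D D) (hu : ∀ w ∈ D, u w + c ≤ u (f w)) {x : α} (hx : x ∈ D) (n : ℕ) :
    u x + n * c ≤ u (f^[n] x) := by
  induction n with
  | zero => simp
  | succ n ih =>
    rw [Function.iterate_succ_apply']
    push_cast
    linarith [hu _ (hf.iterate n hx)]

lemma norm_koenigs_sub_self_le {β : ℂ} {ε : ℝ} (hε : 0 < ε) {k : ℕ} {R : ℝ}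
    (hR : Real.exp^[k] 0 < R) (hMR : Mfun ε k R < β.re) {D : Set ℂ}
    (hDre : ∀ ζ ∈ D, R ≤ ζ.re) {f φ : ℂ → ℂ} (hinv : MapsTo f D D)
    (hbound : ∀ ζ ∈ D, ‖f ζ - (ζ + β)‖ ≤ Mfun ε k ζ.re)
    (hφ : ∀ ζ ∈ D, Tendsto (fun n : ℕ => f^[n] ζ - (n : ℂ) * β) atTop (nhds (φ ζ)))
    {ζ : ℂ} (hζ : ζ ∈ D) (hx : Real.exp^[k] 1 ≤ ζ.re) :
    ‖φ ζ - ζ‖ ≤ (1 + 1 / (ε * (β.re - Mfun ε k R))) * Real.log^[k] ζ.re ^ (-ε) := by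
  set c := β.re - Mfun ε k R
  have hc : 0 < c := sub_pos.2 hMR
  have hx0 : Real.exp^[k] 0 < ζ.re := iterate_exp_zero_lt_of_iterate_exp_one_le hx
  have hstep : ∀ w ∈ D, w.re + c ≤ (f w).re := fun w hw => by
    have hdev := (abs_le.1 ((Complex.abs_re_le_norm _).trans (hbound w hw))).1
    have hM := Mfun_le_Mfun_of_le (ε := ε) (by linarith) hR (hDre w hw)
    simp only [Complex.sub_re, Complex.add_re] at hdev
    linarith
  have hpartial : ∀ n : ℕ, ‖f^[n] ζ - n * β - ζ‖ ≤ ∑ m ∈ Finset.range n, Mfun ε k (ζ.re + m * c) :=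
    fun n => by
      rw [← nsmul_eq_mul]
      refine (norm_iterate_sub_nsmul_sub_le f β ζ n).trans (Finset.sum_le_sum fun m _ => ?_)
      have hm : Real.exp^[k] 0 < ζ.re + m * c :=
        hx0.trans_le (le_add_of_nonneg_right (by positivity))
      exact (hbound _ (hinv.iterate m hζ)).trans
        (Mfun_le_Mfun_of_le (by linarith) hm (add_mul_le_iterate hinv hstep hζ m))
  have hlim : ‖φ ζ - ζ‖ ≤ Mfun ε k ζ.re + Real.log^[k] ζ.re ^ (-ε) / (ε * c) :=
    le_of_tendsto' ((hφ ζ hζ).sub_const ζ).norm fun n =>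
      (hpartial n).trans (sum_Mfun_le hε hc hx0 n)
  have hM := Mfun_le_iterate_log_rpow (ε := ε) hx
  calc ‖φ ζ - ζ‖ ≤ Real.log^[k] ζ.re ^ (-ε) + Real.log^[k] ζ.re ^ (-ε) / (ε * c) := by linarith
    _ = (1 + 1 / (ε * c)) * Real.log^[k] ζ.re ^ (-ε) := by ring

theorem koenigs_limit_refined_logarithmic_asymptotics_general
    (β : ℂ) (ε : ℝ) (hε : 0 < ε) (k : ℕ)
    (R : ℝ) (hR : Real.exp^[k] 0 < R) (hMR : Mfun ε k R < β.re)
    (D : Set ℂ) (hDre : ∀ ζ ∈ D, R ≤ ζ.re)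
    (d : ℝ) (hDim : ∀ ζ ∈ D, |ζ.im| ≤ d * ζ.re)
    (f : ℂ → ℂ) (hinv : Set.MapsTo f D D)
    (hbound : ∀ ζ ∈ D, ‖f ζ - (ζ + β)‖ ≤ Mfun ε k ζ.re)
    (φ : ℂ → ℂ)
    (hφ : ∀ ζ ∈ D, Tendsto (fun n : ℕ => f^[n] ζ - (n : ℂ) * β) atTop (nhds (φ ζ))) :
    ∀ ν : ℝ, 0 < ν → ν < ε →
      ∀ δ > (0 : ℝ), ∃ R' : ℝ, ∀ ζ ∈ D, R' ≤ ζ.re →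
        ‖φ ζ - ζ‖ * ‖Complex.log^[k] ζ‖ ^ ν ≤ δ := by
  intro ν hν hνε δ hδ
  set C := 1 + 1 / (ε * (β.re - Mfun ε k R))
  set K := √(1 + d ^ 2) + 1
  obtain ⟨X₁, hX₁⟩ := exists_norm_iterate_log_le k d
  have htends : Tendsto (fun t => C * K ^ ν * Real.log^[k] t ^ (ν - ε)) atTop (nhds 0) := by
    have := ((tendsto_rpow_neg_atTop (sub_pos.2 hνε)).comp (tendsto_iterate_log_atTop k)).const_mul
      (C * K ^ ν)
    simpa only [mul_zero, neg_sub, Function.comp_def] using this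
  obtain ⟨X₂, hX₂⟩ := eventually_atTop.1 (htends.eventually (eventually_le_nhds hδ))
  refine ⟨max (max X₁ X₂) (Real.exp^[k] 1), fun ζ hζ hre => ?_⟩
  have hx : Real.exp^[k] 1 ≤ ζ.re := (le_max_right _ _).trans hre
  have hL : 0 < Real.log^[k] ζ.re :=
    iterate_log_pos (iterate_exp_zero_lt_of_iterate_exp_one_le hx) le_rfl
  have hφζ := norm_koenigs_sub_self_le hε hR hMR hDre hinv hbound hφ hζ hx
  calc ‖φ ζ - ζ‖ * ‖Complex.log^[k] ζ‖ ^ ν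
      ≤ (C * Real.log^[k] ζ.re ^ (-ε)) * (K * Real.log^[k] ζ.re) ^ ν :=
        mul_le_mul hφζ (Real.rpow_le_rpow (norm_nonneg _)
          (hX₁ ζ (hDim ζ hζ) ((le_max_left _ _).trans ((le_max_left _ _).trans hre))) hν.le)
          (by positivity) ((norm_nonneg _).trans hφζ)
    _ = C * K ^ ν * Real.log^[k] ζ.re ^ (ν - ε) := by
        rw [Real.mul_rpow (by positivity) hL.le, sub_eq_neg_add, Real.rpow_add hL]
        ring
    _ ≤ δ := hX₂ _ ((le_max_right _ _).trans ((le_max_left _ _).trans hre))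

theorem koenigs_limit_refined_logarithmic_asymptotics
    (β : ℂ) (hβ : 0 < β.re) (ε : ℝ) (hε : 0 < ε) (k : ℕ) (hk : 1 ≤ k)
    (R : ℝ) (hR : Real.exp^[k] 0 < R) (hMR : Mfun ε k R < β.re)
    (D : Set ℂ) (hD : IsOpen D) (hDre : ∀ ζ ∈ D, R ≤ ζ.re)
    (d : ℝ) (hd : 0 < d) (hDim : ∀ ζ ∈ D, |ζ.im| ≤ d * ζ.re)
    (f : ℂ → ℂ) (hf : DifferentiableOn ℂ f D) (hinv : Set.MapsTo f D D)
    (hbound : ∀ ζ ∈ D, ‖f ζ - (ζ + β)‖ ≤ Mfun ε k ζ.re)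
    (φ : ℂ → ℂ)
    (hφ : ∀ ζ ∈ D, Tendsto (fun n : ℕ => f^[n] ζ - (n : ℂ) * β) atTop (nhds (φ ζ))) :
    ∀ ν : ℝ, 0 < ν → ν < ε →
      ∀ δ > (0 : ℝ), ∃ R' : ℝ, ∀ ζ ∈ D, R' ≤ ζ.re →
        ‖φ ζ - ζ‖ * ‖Complex.log^[k] ζ‖ ^ ν ≤ δ :=
  koenigs_limit_refined_logarithmic_asymptotics_general β ε hε k R hR hMR D hDre d hDim f hinv
    hbound φ hφ
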